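/- Let k ≥ 1, let G be a k-edge-connected finite simple graph on V, and let S be a k-cut of G. Then the induced subgraph G[S] is connected. -/

import Mathlib

/-! If `G[S]` splits into nonempty parts `A`, `B` with no edges between them, then `δ(S)` is the
disjoint union of `δ(A)` and `δ(B)`. As nonempty proper subsets of `V`, `A` and `B` each have at
least `k` crossing edges, so `k = |δ(S)| ≥ 2k`, which is impossible for `k ≥ 1`. -/

open Finset

variable {V : Type*} [Fintype V] [DecidableEq V]

/-- `Crosses S e`: exactly one endpoint of the edge/link `e` lies in `S`. -/
def Crosses (S : Finset V) (e : Sym2 V) : Prop :=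
  ∃ x y : V, e = s(x, y) ∧ x ∈ S ∧ y ∉ S

instance (S : Finset V) : DecidablePred (Crosses S) := fun e =>
  decidable_of_iff (∃ x y : V, e = s(x, y) ∧ x ∈ S ∧ y ∉ S) Iff.rfl

/-- The cut `δ(S)`: edges of `G` with exactly one endpoint in `S`. -/
def cutEdges (G : SimpleGraph V) [DecidableRel G.Adj] (S : Finset V) :
    Finset (Sym2 V) :=
  G.edgeFinset.filter fun e => Crosses S e

/-- `G` is `k`-edge-connected: every nonempty proper cut has at least `k` crossing edges. -/
def EdgeConnected (G : SimpleGraph V) [DecidableRel G.Adj] (k : ℕ) : Prop :=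
  ∀ S : Finset V, S.Nonempty → S ≠ Finset.univ → k ≤ (cutEdges G S).card

/-- `S` is a `k`-cut: a nonempty proper vertex set with exactly `k` crossing edges. -/
def IsCut (G : SimpleGraph V) [DecidableRel G.Adj] (k : ℕ) (S : Finset V) : Prop :=
  S.Nonempty ∧ S ≠ Finset.univ ∧ (cutEdges G S).card = k

/-- `(S₁, S₂)` are snug shores for `v` (with respect to the root `r`):
two `k`-cuts avoiding `r` with `v ∉ S₁` and `S₂ = S₁ ∪ {v}`. -/
def SnugShores (G : SimpleGraph V) [DecidableRel G.Adj] (k : ℕ) (r v : V)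
    (S₁ S₂ : Finset V) : Prop :=
  IsCut G k S₁ ∧ IsCut G k S₂ ∧ r ∉ S₁ ∧ r ∉ S₂ ∧ v ∉ S₁ ∧ S₂ = insert v S₁

/-- `v` is a snug vertex (with respect to the root `r`). -/
def Snug (G : SimpleGraph V) [DecidableRel G.Adj] (k : ℕ) (r v : V) : Prop :=
  v ≠ r ∧ k + 1 ≤ G.degree v ∧ ∃ S₁ S₂ : Finset V, SnugShores G k r v S₁ S₂

/-- A snug chain: snug vertices `u 0, …, u t` together with `k`-cuts
`S 0, …, S (t+1)` such that `(S i, S (i+1))` are snug shores for `u i`. -/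
def IsSnugChain (G : SimpleGraph V) [DecidableRel G.Adj] (k : ℕ) (r : V)
    (t : ℕ) (u : ℕ → V) (S : ℕ → Finset V) : Prop :=
  ∀ i ≤ t, Snug G k r (u i) ∧ SnugShores G k r (u i) (S i) (S (i + 1))

theorem crosses_mk_iff {α : Type*} {S : Finset α} {x y : α} :
    Crosses S s(x, y) ↔ x ∈ S ∧ y ∉ S ∨ y ∈ S ∧ x ∉ S := by
  simp only [Crosses, Sym2.eq_iff]
  constructor
  · rintro ⟨a, b, ⟨rfl, rfl⟩ | ⟨rfl, rfl⟩, ha, hb⟩ <;> simp_all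
  · rintro (⟨hx, hy⟩ | ⟨hy, hx⟩)
    · exact ⟨x, y, .inl ⟨rfl, rfl⟩, hx, hy⟩
    · exact ⟨y, x, .inr ⟨rfl, rfl⟩, hy, hx⟩

section NoEdgesBetween

variable {G : SimpleGraph V} [DecidableRel G.Adj] {A B : Finset V}

theorem mk_mem_cutEdges_iff {S : Finset V} {x y : V} :
    s(x, y) ∈ cutEdges G S ↔ G.Adj x y ∧ (x ∈ S ∧ y ∉ S ∨ y ∈ S ∧ x ∉ S) := by
  rw [cutEdges, mem_filter, SimpleGraph.mem_edgeFinset, SimpleGraph.mem_edgeSet, crosses_mk_iff]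

theorem cutEdges_union_of_forall_not_adj (hAB : Disjoint A B)
    (h : ∀ a ∈ A, ∀ b ∈ B, ¬G.Adj a b) :
    cutEdges G (A ∪ B) = cutEdges G A ∪ cutEdges G B := by
  ext e
  induction e using Sym2.ind with
  | h x y =>
    have hx : x ∈ A → x ∉ B := fun hx => disjoint_left.mp hAB hx
    have hy : y ∈ A → y ∉ B := fun hy => disjoint_left.mp hAB hy
    have := h x; have := h y
    simp only [mem_union, mk_mem_cutEdges_iff]
    grind [G.adj_symm]

theorem disjoint_cutEdges_of_forall_not_adj (hAB : Disjoint A B)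
    (h : ∀ a ∈ A, ∀ b ∈ B, ¬G.Adj a b) :
    Disjoint (cutEdges G A) (cutEdges G B) := by
  rw [disjoint_left]
  intro e
  induction e using Sym2.ind with
  | h x y =>
    have hx : x ∈ A → x ∉ B := fun hx => disjoint_left.mp hAB hx
    have hy : y ∈ A → y ∉ B := fun hy => disjoint_left.mp hAB hy
    have := h x; have := h y
    simp only [mk_mem_cutEdges_iff]
    grind [G.adj_symm]

theorem card_cutEdges_union_of_forall_not_adj (hAB : Disjoint A B)
    (h : ∀ a ∈ A, ∀ b ∈ B, ¬G.Adj a b) :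
    #(cutEdges G (A ∪ B)) = #(cutEdges G A) + #(cutEdges G B) := by
  rw [cutEdges_union_of_forall_not_adj hAB h,
    card_union_of_disjoint (disjoint_cutEdges_of_forall_not_adj hAB h)]

end NoEdgesBetween

theorem SimpleGraph.exists_split_of_not_preconnected_induce {α : Type*} [DecidableEq α]
    {G : SimpleGraph α} {S : Finset α} (h : ¬(G.induce (S : Set α)).Preconnected) :
    ∃ A B : Finset α, Disjoint A B ∧ A ∪ B = S ∧ A.Nonempty ∧ B.Nonempty ∧
      ∀ a ∈ A, ∀ b ∈ B, ¬G.Adj a b := by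
  classical
  simp only [Preconnected, not_forall] at h
  obtain ⟨u, ⟨v, hv⟩, huv⟩ := h
  let P : α → Prop := fun a => ∃ ha : a ∈ S, (G.induce (S : Set α)).Reachable u ⟨a, ha⟩
  refine ⟨S.filter P, S.filter (¬P ·), disjoint_filter_filter_not _ _ _,
    filter_union_filter_not_eq _ _, ⟨u, mem_filter.mpr ⟨u.2, u.2, .rfl⟩⟩,
    ⟨v, mem_filter.mpr ⟨hv, fun ⟨_, h⟩ => huv h⟩⟩, ?_⟩
  rintro a ha b hb hab
  obtain ⟨-, haS, hua⟩ := mem_filter.mp ha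
  obtain ⟨hbS, hub⟩ := mem_filter.mp hb
  exact hub ⟨hbS, hua.trans (SimpleGraph.Adj.reachable (by simpa using hab))⟩

theorem kcut_connected_general
    (k : ℕ) (hk : 1 ≤ k)
    (G : SimpleGraph V) [DecidableRel G.Adj] (hG : EdgeConnected G k)
    (S : Finset V) (hS : IsCut G k S) :
    (G.induce (S : Set V)).Connected := by
  obtain ⟨⟨v, hv⟩, hSuniv, hcard⟩ := hS
  have : Nonempty (S : Set V) := ⟨⟨v, hv⟩⟩
  rw [SimpleGraph.connected_iff]
  refine ⟨by_contra fun hS => ?_, this⟩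
  obtain ⟨A, B, hAB, rfl, hA, hB, hnadj⟩ := SimpleGraph.exists_split_of_not_preconnected_induce hS
  have hAk := hG A hA fun h => hSuniv (univ_subset_iff.mp (h ▸ subset_union_left))
  have hBk := hG B hB fun h => hSuniv (univ_subset_iff.mp (h ▸ subset_union_right))
  rw [card_cutEdges_union_of_forall_not_adj hAB hnadj] at hcard
  omega

/-- In a `k`-edge-connected graph, every `k`-cut induces a connected subgraph. -/
theorem kcut_connected
    (k : ℕ) (hk : 1 ≤ k) (hV : 2 ≤ Fintype.card V)
    (G : SimpleGraph V) [DecidableRel G.Adj] (hG : EdgeConnected G k)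
    (S : Finset V) (hS : IsCut G k S) :
    (G.induce (S : Set V)).Connected :=
  kcut_connected_general k hk G hG S hS
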